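/- Let G be an edge-pancyclic simple graph of order n ≥ 10 and diameter d ≥ 5, let x be a vertex of eccentricity d, and for 0 ≤ i ≤ d let V_i be the set of vertices at distance exactly i from x. Then |V_1| ≥ 3, |V_{d−1}| + |V_d| ≥ 4, and |V_i| + |V_{i+1}| ≥ 5 for every i with 1 ≤ i ≤ d − 2. -/

import Mathlib

/-- Number of edges of a simple graph. -/
noncomputable def numEdges {V : Type*} (G : SimpleGraph V) : ℕ := Nat.card G.edgeSet

/-- Every edge of `G` lies in a triangle. -/
def EveryEdgeInTriangle {V : Type*} (G : SimpleGraph V) : Prop :=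
  ∀ ⦃u v : V⦄, G.Adj u v → ∃ w, G.Adj u w ∧ G.Adj v w

/-- `G` is 2-connected: it has at least 3 vertices and deleting any single vertex
leaves a connected graph. -/
def TwoConnected {V : Type*} (G : SimpleGraph V) : Prop :=
  3 ≤ Nat.card V ∧ ∀ v : V, (G.induce ({v}ᶜ : Set V)).Connected

/-- `G` is 3-connected: it has at least 4 vertices and deleting any set of at most 2
vertices leaves a connected graph. -/
def ThreeConnected {V : Type*} (G : SimpleGraph V) : Prop :=
  4 ≤ Nat.card V ∧ ∀ S : Set V, S.ncard ≤ 2 → (G.induce (Sᶜ : Set V)).Connected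

/-- `G` is edge-pancyclic: every edge lies in a cycle of each length `k` with `3 ≤ k ≤ |V|`. -/
def EdgePancyclic {V : Type*} (G : SimpleGraph V) : Prop :=
  ∀ k : ℕ, 3 ≤ k → k ≤ Nat.card V → ∀ ⦃u v : V⦄, G.Adj u v →
    ∃ c : G.Walk u u, c.IsCycle ∧ c.length = k ∧ s(u, v) ∈ c.edges

/-- Base relation for the graph `A_n` (`n = 2q`): vertices `inl i` are the cycle
vertices `vᵢ`, vertices `inr i` are the added vertices `uᵢ`; `vᵢ ~ vᵢ₊₁`,
`uᵢ ~ vᵢ` and `uᵢ ~ vᵢ₊₁`. -/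
def ARel (q : ℕ) : (ZMod q ⊕ ZMod q) → (ZMod q ⊕ ZMod q) → Prop :=
  fun x y => match x, y with
    | Sum.inl a, Sum.inl b => a = b + 1
    | Sum.inr a, Sum.inl b => b = a ∨ b = a + 1
    | _, _ => False

/-- The graph `A_n` where `n = 2q`. -/
def graphA (q : ℕ) : SimpleGraph (ZMod q ⊕ ZMod q) := SimpleGraph.fromRel (ARel q)

/-- The graph `F_n` where `n = 2q + 1`: `A_{n-1}` plus a new vertex (`none`)
adjacent to `v₁` and `v₂`. -/
def graphF (q : ℕ) : SimpleGraph (Option (ZMod q ⊕ ZMod q)) :=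
  SimpleGraph.fromRel (fun x y => match x, y with
    | some a, some b => ARel q a b
    | none, some w => w = Sum.inl 1 ∨ w = Sum.inl 2
    | _, _ => False)

/-- The graph `G_n` where `n = 2q + 1`: `A_{n-1}` plus a new vertex (`none`)
adjacent to `u₁` and `v₁`. -/
def graphG (q : ℕ) : SimpleGraph (Option (ZMod q ⊕ ZMod q)) :=
  SimpleGraph.fromRel (fun x y => match x, y with
    | some a, some b => ARel q a b
    | none, some w => w = Sum.inr 1 ∨ w = Sum.inl 1
    | _, _ => False)

/-- The graph `H_n` where `n = 2q + 1`: `A_{n-1}` with the edge `v₁v₂` subdivided by a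
new vertex (`none`), which is moreover joined to `u₁`. -/
def graphH (q : ℕ) : SimpleGraph (Option (ZMod q ⊕ ZMod q)) :=
  SimpleGraph.fromRel (fun x y => match x, y with
    | some (Sum.inl a), some (Sum.inl b) =>
        a = b + 1 ∧ ¬(a = 2 ∧ b = 1) ∧ ¬(a = 1 ∧ b = 2)
    | some a, some b => ARel q a b
    | none, some w => w = Sum.inl 1 ∨ w = Sum.inl 2 ∨ w = Sum.inr 1
    | _, _ => False)

/-- The wheel graph of order `n`: the hub `none` joined to every vertex of the
cycle `C_{n-1}` on `ZMod (n-1)`. -/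
def wheelGraph (n : ℕ) : SimpleGraph (Option (ZMod (n - 1))) :=
  SimpleGraph.fromRel (fun x y => match x, y with
    | some a, some b => a = b + 1
    | none, some _ => True
    | _, _ => False)

/-!
An edge-pancyclic graph has a Hamiltonian cycle through every edge `ab`; deleting `a` and `b`
from it leaves a walk through all the other vertices. Along a walk the distance from `x` changes
by at most one per step, so when `x` and a farthest vertex `z` differ from `a` and `b`, that walk
meets every distance layer `V_t`, `t ≤ d`, outside `{a, b}`. Hence no layer is covered by the
ends of one edge, which together with the triangles through every edge gives all three bounds.
-/

namespace SimpleGraph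

variable {V : Type*} {G : SimpleGraph V}

lemma Adj.dist_le_dist_add_one {u v w : V} (h : G.Adj v w) : G.dist u w ≤ G.dist u v + 1 := by
  rcases h.diff_dist_adj (u := u) with h | h | h <;> omega

lemma ncard_neighborSet_lt_ncard_add_ncard [Finite V] {x z : V} {d : ℕ} (hz : G.dist x z = d)
    (hmax : ∀ v, G.dist x v ≤ d) :
    (G.neighborSet z).ncard < {v | G.dist x v = d - 1}.ncard + {v | G.dist x v = d}.ncard := by
  have hsub : G.neighborSet z ⊆ ({v | G.dist x v = d - 1} ∪ {v | G.dist x v = d}) \ {z} := by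
    intro u hzu
    have := (G.adj_symm hzu).dist_le_dist_add_one (u := x)
    have := hmax u
    refine ⟨?_, hzu.ne'⟩
    simp only [Set.mem_union, Set.mem_ofPred_eq]
    omega
  calc (G.neighborSet z).ncard
      ≤ (({v | G.dist x v = d - 1} ∪ {v | G.dist x v = d}) \ {z}).ncard :=
        Set.ncard_le_ncard hsub
    _ < ({v | G.dist x v = d - 1} ∪ {v | G.dist x v = d}).ncard :=
        Set.ncard_sdiff_singleton_lt_of_mem (Or.inr hz)
    _ ≤ _ := Set.ncard_union_le _ _

namespace Walk

lemma IsPath.mem_support_tail_iff {u v w : V} {p : G.Walk u v} (hp : p.IsPath) (hnil : ¬p.Nil) :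
    w ∈ p.tail.support ↔ w ∈ p.support ∧ w ≠ u := by
  have hnd := hp.support_nodup
  rw [← cons_support_tail hnil] at hnd ⊢
  have hu : u ∉ p.tail.support := (List.nodup_cons.mp hnd).1
  simp only [List.mem_cons]
  constructor
  · exact fun hw => ⟨Or.inr hw, fun h => hu (h ▸ hw)⟩
  · rintro ⟨rfl | hw, hne⟩
    · exact absurd rfl hne
    · exact hw

lemma IsCycle.snd_eq_or_snd_reverse_eq {u v : V} {c : G.Walk u u} (hc : c.IsCycle)
    (h : s(u, v) ∈ c.edges) : c.snd = v ∨ c.reverse.snd = v := by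
  rw [← c.cons_tail_eq hc.not_nil, edges_cons, List.mem_cons] at h
  rcases h with h | h
  · exact Or.inl (Sym2.congr_right.mp h).symm
  · have htail : ¬c.tail.Nil := fun hnil => by simp [edges_eq_nil.mpr hnil] at h
    right
    rw [snd_reverse, ← c.cons_tail_eq hc.not_nil, penultimate_cons_of_not_nil _ _ htail]
    exact (hc.isPath_tail.eq_penultimate_of_mem_edges h).symm

lemma exists_mem_support_eq_of_le_of_le {f : V → ℕ}
    (hf : ∀ ⦃a b⦄, G.Adj a b → f b ≤ f a + 1) {t : ℕ} {u v : V} (p : G.Walk u v) {y z : V}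
    (hy : y ∈ p.support) (hz : z ∈ p.support) (hyt : f y ≤ t) (htz : t ≤ f z) :
    ∃ m ∈ p.support, f m = t := by
  induction p generalizing y z with
  | nil =>
    simp only [support_nil, List.mem_singleton] at hy hz
    subst hy hz
    exact ⟨_, List.mem_singleton_self _, le_antisymm hyt htz⟩
  | @cons a b _ hab q ih =>
    by_cases ha : f a = t
    · exact ⟨a, start_mem_support _, ha⟩
    rw [support_cons, List.mem_cons] at hy hz
    have hy' : ∃ y' ∈ q.support, f y' ≤ t := by
      rcases hy with rfl | hy
      · exact ⟨b, q.start_mem_support, (hf hab).trans (by omega)⟩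
      · exact ⟨y, hy, hyt⟩
    have hz' : ∃ z' ∈ q.support, t ≤ f z' := by
      rcases hz with rfl | hz
      · exact ⟨b, q.start_mem_support, by have := hf hab.symm; omega⟩
      · exact ⟨z, hz, htz⟩
    obtain ⟨y', hy', hy't⟩ := hy'
    obtain ⟨z', hz', htz'⟩ := hz'
    obtain ⟨m, hm, hmt⟩ := ih hy' hz' hy't htz'
    exact ⟨m, List.mem_cons_of_mem _ hm, hmt⟩

lemma dist_getVert_of_length_eq_dist {u v : V} {p : G.Walk u v} (hp : p.length = G.dist u v)
    {k : ℕ} (hk : k ≤ p.length) : G.dist u (p.getVert k) = k := by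
  rw [← length_eq_dist_of_subwalk hp (p.isSubwalk_take k), take_length]
  omega

lemma IsHamiltonianCycle.exists_walk_mem_support_iff [DecidableEq V] {u : V} {c : G.Walk u u}
    (hc : c.IsHamiltonianCycle) :
    ∃ (a b : V) (q : G.Walk a b), ∀ w, w ∈ q.support ↔ w ≠ u ∧ w ≠ c.snd := by
  have hlen : 2 ≤ c.tail.length := by
    have := hc.three_le_length
    have := length_tail_add_one hc.not_nil
    omega
  have hp : c.tail.IsPath := hc.isPath_tail
  have hpnil : ¬c.tail.Nil := by rw [← length_eq_zero_iff]; omega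
  have hrnil : ¬c.tail.tail.reverse.Nil := by
    rw [← length_eq_zero_iff, length_reverse]
    have := length_tail_add_one hpnil
    omega
  refine ⟨_, _, c.tail.tail.reverse.tail, fun w => ?_⟩
  rw [hp.tail.reverse.mem_support_tail_iff hrnil, support_reverse, List.mem_reverse,
    hp.mem_support_tail_iff hpnil]
  simp only [hc.isHamiltonian_tail.mem_support, true_and]
  exact and_comm

end Walk

end SimpleGraph

open SimpleGraph

section EdgePancyclic

variable {V : Type*} {G : SimpleGraph V}

lemma EdgePancyclic.everyEdgeInTriangle (hep : EdgePancyclic G) (hV : 3 ≤ Nat.card V) :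
    EveryEdgeInTriangle G := by
  intro u v h
  obtain ⟨c, -, hlen, hmem⟩ := hep 3 le_rfl hV h
  have hv := c.snd_mem_support_of_mem_edges hmem
  rcases c with _ | ⟨h₁, _ | ⟨h₂, _ | ⟨h₃, _ | ⟨_, _⟩⟩⟩⟩ <;> simp at hlen
  simp only [Walk.support_cons, Walk.support_nil, List.mem_cons, List.mem_nil_iff,
    or_false] at hv
  rcases hv with rfl | rfl | rfl | rfl
  · exact absurd rfl h.ne
  · exact ⟨_, h₃.symm, h₂⟩
  · exact ⟨_, h₁, h₂.symm⟩
  · exact absurd rfl h.ne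

lemma EdgePancyclic.exists_isHamiltonianCycle_snd_eq [DecidableEq V] (hep : EdgePancyclic G)
    (hV : 3 ≤ Nat.card V) {u v : V} (h : G.Adj u v) :
    ∃ c : G.Walk u u, c.IsHamiltonianCycle ∧ c.snd = v := by
  have : Finite V := Nat.finite_of_card_ne_zero (by omega)
  cases nonempty_fintype V
  obtain ⟨c, hc, hlen, hmem⟩ := hep _ hV le_rfl h
  have hham :
      ∀ c' : G.Walk u u, c'.IsCycle → c'.length = Nat.card V → c'.IsHamiltonianCycle :=
    fun c' hcyc hlen' => Walk.isHamiltonianCycle_iff_isCycle_and_length_eq.mpr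
      ⟨hcyc, hlen'.trans Nat.card_eq_fintype_card⟩
  rcases hc.snd_eq_or_snd_reverse_eq hmem with hs | hs
  · exact ⟨c, hham c hc hlen, hs⟩
  · exact ⟨c.reverse, hham _ hc.reverse (by rwa [Walk.length_reverse]), hs⟩

lemma EdgePancyclic.connected (hep : EdgePancyclic G) (hV : 3 ≤ Nat.card V) {u v : V}
    (h : G.Adj u v) : G.Connected := by
  classical
  obtain ⟨c, hc, -⟩ := hep.exists_isHamiltonianCycle_snd_eq hV h
  exact (connected_iff_exists_forall_reachable G).mpr
    ⟨u, fun w => ⟨c.takeUntil w (hc.mem_support w)⟩⟩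

lemma EdgePancyclic.exists_ne_ne_dist_eq (hep : EdgePancyclic G) (hV : 3 ≤ Nat.card V)
    {a b x z : V} (hab : G.Adj a b) (ha : 0 < G.dist x a) (hb : 0 < G.dist x b)
    (haz : G.dist x a < G.dist x z) (hbz : G.dist x b < G.dist x z) {t : ℕ}
    (ht : t ≤ G.dist x z) : ∃ m, m ≠ a ∧ m ≠ b ∧ G.dist x m = t := by
  classical
  have hx : ∀ {c}, 0 < G.dist x c → x ≠ c := fun hc h => by subst h; simp at hc
  have hz : ∀ {c}, G.dist x c < G.dist x z → z ≠ c := fun hc h => by subst h; omega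
  obtain ⟨c, hc, rfl⟩ := hep.exists_isHamiltonianCycle_snd_eq hV hab
  obtain ⟨_, _, q, hq⟩ := hc.exists_walk_mem_support_iff
  obtain ⟨m, hm, hmt⟩ := q.exists_mem_support_eq_of_le_of_le (f := G.dist x)
    (fun _ _ h => h.dist_le_dist_add_one) ((hq x).mpr ⟨hx ha, hx hb⟩)
    ((hq z).mpr ⟨hz haz, hz hbz⟩) (by simp) ht
  exact ⟨m, ((hq m).mp hm).1, ((hq m).mp hm).2, hmt⟩

/-- If the neighbours of `v` were the two ends `a, w` of a triangle `vaw`, then `{a, w}` would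
separate `v` from the rest of the graph. -/
lemma EdgePancyclic.three_le_ncard_neighborSet (hep : EdgePancyclic G) (hV : 4 ≤ Nat.card V)
    {v a : V} (hva : G.Adj v a) : 3 ≤ (G.neighborSet v).ncard := by
  have : Finite V := Nat.finite_of_card_ne_zero (by omega)
  by_contra! hdeg
  obtain ⟨w, hvw, haw⟩ := hep.everyEdgeInTriangle (by omega) hva
  have hN : ∀ u, G.Adj v u → u = a ∨ u = w := by
    by_contra! hu
    obtain ⟨u, hvu, hua, huw⟩ := hu
    have : 2 < (G.neighborSet v).ncard :=
      (Set.two_lt_ncard_iff (Set.toFinite _)).mpr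
        ⟨a, w, u, hva, hvw, hvu, haw.ne, Ne.symm hua, Ne.symm huw⟩
    omega
  classical
  cases nonempty_fintype V
  obtain ⟨z, -, hz⟩ :=
    Finset.exists_mem_notMem_of_card_lt_card (s := ({v, a, w} : Finset V)) (t := .univ)
    (by
      rw [Finset.card_univ, ← Nat.card_eq_fintype_card]
      have := Finset.card_le_three (a := v) (b := a) (c := w)
      omega)
  simp only [Finset.mem_insert, Finset.mem_singleton, not_or] at hz
  obtain ⟨hzv, hza, hzw⟩ := hz
  have hvz : 1 < G.dist v z := (hep.connected (by omega) hva).one_lt_dist_of_ne_of_not_adj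
    (Ne.symm hzv) fun h => (hN z h).elim hza hzw
  have hva₁ : G.dist v a = 1 := dist_eq_one_iff_adj.mpr hva
  have hvw₁ : G.dist v w = 1 := dist_eq_one_iff_adj.mpr hvw
  obtain ⟨m, hma, hmw, hm⟩ := hep.exists_ne_ne_dist_eq (x := v) (z := z) (t := 1) (by omega) haw
    (by omega) (by omega) (by omega) (by omega) hvz.le
  rcases hN m (dist_eq_one_iff_adj.mp hm) with rfl | rfl
  · exact hma rfl
  · exact hmw rfl

/-- Two consecutive inner distance layers contain an edge `pq` and a triangle `pqw`; the ends
of each of the edges `pq` and `pw` (or `qw`) fail to exhaust the layers they meet. -/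
lemma EdgePancyclic.five_le_ncard_add_ncard (hep : EdgePancyclic G) (hV : 3 ≤ Nat.card V)
    {x z : V} {i : ℕ} (hi : 1 ≤ i) (hiz : i + 1 < G.dist x z) :
    5 ≤ {v | G.dist x v = i}.ncard + {v | G.dist x v = i + 1}.ncard := by
  have : Finite V := Nat.finite_of_card_ne_zero (by omega)
  obtain ⟨geo, hgeo⟩ :=
    (Reachable.of_dist_ne_zero (by omega : G.dist x z ≠ 0)).exists_walk_length_eq_dist
  set p := geo.getVert i
  set q := geo.getVert (i + 1)
  have hp : G.dist x p = i := geo.dist_getVert_of_length_eq_dist hgeo (by omega)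
  have hq : G.dist x q = i + 1 := geo.dist_getVert_of_length_eq_dist hgeo (by omega)
  have hpq : G.Adj p q := geo.adj_getVert_succ (by omega)
  obtain ⟨p', hp'p, -, hp'⟩ := hep.exists_ne_ne_dist_eq hV (x := x) (z := z) (t := i) hpq
    (by omega) (by omega) (by omega) (by omega) (by omega)
  obtain ⟨q', -, hq'q, hq'⟩ := hep.exists_ne_ne_dist_eq hV (x := x) (z := z) (t := i + 1) hpq
    (by omega) (by omega) (by omega) (by omega) (by omega)
  obtain ⟨w, hpw, hqw⟩ := hep.everyEdgeInTriangle hV hpq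
  have := hpw.dist_le_dist_add_one (u := x)
  have := hqw.symm.dist_le_dist_add_one (u := x)
  rcases (show G.dist x w = i ∨ G.dist x w = i + 1 by omega) with hw | hw
  · obtain ⟨p'', hp''p, hp''w, hp''⟩ :=
      hep.exists_ne_ne_dist_eq hV (x := x) (z := z) (t := i) hpw
      (by omega) (by omega) (by omega) (by omega) (by omega)
    have : 2 < {v | G.dist x v = i}.ncard := (Set.two_lt_ncard_iff (Set.toFinite _)).mpr
      ⟨p, w, p'', hp, hw, hp'', hpw.ne, Ne.symm hp''p, Ne.symm hp''w⟩
    have : 1 < {v | G.dist x v = i + 1}.ncard :=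
      (Set.one_lt_ncard_iff (Set.toFinite _)).mpr ⟨q, q', hq, hq', Ne.symm hq'q⟩
    omega
  · obtain ⟨q'', hq''q, hq''w, hq''⟩ :=
      hep.exists_ne_ne_dist_eq hV (x := x) (z := z) (t := i + 1) hqw
      (by omega) (by omega) (by omega) (by omega) (by omega)
    have : 1 < {v | G.dist x v = i}.ncard :=
      (Set.one_lt_ncard_iff (Set.toFinite _)).mpr ⟨p, p', hp, hp', Ne.symm hp'p⟩
    have : 2 < {v | G.dist x v = i + 1}.ncard := (Set.two_lt_ncard_iff (Set.toFinite _)).mpr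
      ⟨q, w, q'', hq, hw, hq'', hqw.ne, Ne.symm hq''q, Ne.symm hq''w⟩
    omega

end EdgePancyclic

theorem stmt_14_general {V : Type*} (G : SimpleGraph V)
    (hn : 10 ≤ Nat.card V) (hep : EdgePancyclic G)
    (d : ℕ) (hd : 5 ≤ d)
    (x : V) (hecc_le : ∀ v : V, G.dist x v ≤ d) (hecc : ∃ v : V, G.dist x v = d) :
    3 ≤ {v : V | G.dist x v = 1}.ncard ∧
    4 ≤ {v : V | G.dist x v = d - 1}.ncard + {v : V | G.dist x v = d}.ncard ∧
    ∀ i : ℕ, 1 ≤ i → i ≤ d - 2 →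
      5 ≤ {v : V | G.dist x v = i}.ncard + {v : V | G.dist x v = i + 1}.ncard := by
  have : Finite V := Nat.finite_of_card_ne_zero (by omega)
  obtain ⟨z, hz⟩ := hecc
  obtain ⟨w, -⟩ := exists_walk_of_dist_ne_zero (by omega : G.dist x z ≠ 0)
  have hw : ¬w.Nil := Walk.not_nil_of_ne fun h => by subst h; simp at hz; omega
  refine ⟨?_, ?_, fun i hi hid => hep.five_le_ncard_add_ncard (by omega) hi (z := z) (by omega)⟩
  · have hN : {v | G.dist x v = 1} = G.neighborSet x := by ext; simp
    rw [hN]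
    exact hep.three_le_ncard_neighborSet (by omega) (w.adj_snd hw)
  · have := hep.three_le_ncard_neighborSet (by omega) (w.adj_penultimate hw).symm
    have := ncard_neighborSet_lt_ncard_add_ncard hz hecc_le
    omega

/-- Layer bounds for an edge-pancyclic graph of order `n ≥ 10` and
diameter `d ≥ 5`, where `x` is a vertex of eccentricity `d` and
`V_i = {v | dist x v = i}`. -/
theorem stmt_14 {V : Type*} (G : SimpleGraph V)
    (hn : 10 ≤ Nat.card V) (hep : EdgePancyclic G)
    (d : ℕ) (hd : 5 ≤ d) (hdiam : G.diam = d)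
    (x : V) (hecc_le : ∀ v : V, G.dist x v ≤ d) (hecc : ∃ v : V, G.dist x v = d) :
    3 ≤ {v : V | G.dist x v = 1}.ncard ∧
    4 ≤ {v : V | G.dist x v = d - 1}.ncard + {v : V | G.dist x v = d}.ncard ∧
    ∀ i : ℕ, 1 ≤ i → i ≤ d - 2 →
      5 ≤ {v : V | G.dist x v = i}.ncard + {v : V | G.dist x v = i + 1}.ncard :=
  stmt_14_general G hn hep d hd x hecc_le hecc
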